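/- There exists a function τ : V → Finset ℕ on a finite vertex set V and time points t₁ < t₂ < t₃ such that the stability sets under union semantics, S₁ = {v | t₁ ∈ τ v ∧ (τ v ∩ {t₂, t₃}).Nonempty} (old fixed at t₁, new extended to {t₂,t₃}) and S₂ = {v | (τ v ∩ {t₁, t₂}).Nonempty ∧ t₃ ∈ τ v} (new fixed at t₃, old extended to {t₁,t₂}), are distinct; hence minimal interval pairs for stability derived by extending T_new are not in general equal to those derived by extending T_old. -/
import Mathlib

theorem stmt8 :
    ∃ (V : Type) (_ : Fintype V) (τ : V → Finset ℕ) (t₁ t₂ t₃ : ℕ),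
      t₁ < t₂ ∧ t₂ < t₃ ∧
      {v : V | t₁ ∈ τ v ∧ (τ v ∩ {t₂, t₃}).Nonempty} ≠
        {v : V | (τ v ∩ {t₁, t₂}).Nonempty ∧ t₃ ∈ τ v} := by
  refine ⟨Unit, inferInstance, fun _ => {0, 1}, 0, 1, 2, by norm_num, by norm_num, ?_⟩
  intro h
  have : (() : Unit) ∈ {v : Unit | (0 : ℕ) ∈ ({0,1} : Finset ℕ) ∧ (({0,1} : Finset ℕ) ∩ {1, 2}).Nonempty} := by
    constructor
    · decide
    · exact ⟨1, by decide⟩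
  rw [h] at this
  exact absurd this.2 (by decide)
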